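/- Let d ≥ 1, let Γ be a nonempty set of proper 4-colorings of Q_d, and let f be uniformly distributed on Γ. Then log₂|Γ| ≤ ∑_{u ∈ O} T_Γ(u), where T_Γ(u) = (1/d)·H(f_{N_u}) + H(f_u | f(N_u)) and O is the set of odd vertices of Q_d. -/

import Mathlib

open Finset

abbrev V (d : ℕ) : Type := Fin d → Bool

def cube (d : ℕ) : SimpleGraph (V d) where
  Adj u v := (Finset.univ.filter fun i => u i ≠ v i).card = 1
  symm := by
    constructor
    intro u v h
    have e : (Finset.univ.filter fun i => v i ≠ u i) = (Finset.univ.filter fun i => u i ≠ v i) := by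
      apply Finset.filter_congr
      intro i _
      exact ne_comm
    rw [e]
    exact h
  loopless := by
    constructor
    intro u h
    simp at h

instance cubeAdjDecidable (d : ℕ) : DecidableRel (cube d).Adj := fun u v =>
  decidable_of_iff ((Finset.univ.filter fun i => u i ≠ v i).card = 1) Iff.rfl

/-- a vertex of the hypercube is even if it has an even number of `true` coordinates. -/
def isEven {d : ℕ} (v : V d) : Prop := Even (Finset.univ.filter fun i => v i = true).card

/-- `f` is a proper `q`-coloring of the `d`-dimensional hypercube. -/
def IsColoring (d q : ℕ) (f : V d → Fin q) : Prop :=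
  ∀ u v : V d, (cube d).Adj u v → f u ≠ f v

open scoped Classical in
/-- The probability that the random variable `X` (on the finite probability space `(Ω, p)`)
takes the value `t`. -/
noncomputable def pr {Ω T : Type*} [Fintype Ω] (p : Ω → ℝ) (X : Ω → T) (t : T) : ℝ :=
  ∑ ω : Ω, if X ω = t then p ω else 0

/-- The binary (Shannon) entropy `H(X) = ∑_t P(X = t) log₂ (1 / P(X = t))`. -/
noncomputable def ent {Ω T : Type*} [Fintype Ω] [Fintype T] (p : Ω → ℝ) (X : Ω → T) : ℝ :=
  ∑ t : T, pr p X t * Real.logb 2 (pr p X t)⁻¹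

/-- The conditional entropy
`H(X | Y) = ∑_u P(Y = u) ∑_t P(X = t | Y = u) log₂ (1 / P(X = t | Y = u))`. -/
noncomputable def condEnt {Ω T U : Type*} [Fintype Ω] [Fintype T] [Fintype U]
    (p : Ω → ℝ) (X : Ω → T) (Y : Ω → U) : ℝ :=
  ∑ u : U, pr p Y u *
    ∑ t : T, (pr p (fun ω => (X ω, Y ω)) (t, u) / pr p Y u) *
      Real.logb 2 ((pr p (fun ω => (X ω, Y ω)) (t, u) / pr p Y u))⁻¹

/-- `T_p(u) = (1/d) H(f_{N_u}) + H(f_u | f(N_u))`, where `f` is a random coloring with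
distribution `p`, `f_{N_u}` is the restriction of `f` to the neighborhood of `u`, and
`f(N_u)` is the set of colors appearing on the neighborhood of `u`. -/
noncomputable def Tp (d : ℕ) (p : (V d → Fin 4) → ℝ) (u : V d) : ℝ :=
  (1 / (d : ℝ)) * ent p (fun f => fun v : {v : V d // (cube d).Adj u v} => f v.1) +
    condEnt p (fun f => f u)
      (fun f => Finset.image (fun v : {v : V d // (cube d).Adj u v} => f v.1) Finset.univ)

/-- The uniform distribution on the finite set `Γ` of colorings. -/
noncomputable def unif (d : ℕ) (Γ : Finset (V d → Fin 4)) : (V d → Fin 4) → ℝ :=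
  fun f => if f ∈ Γ then ((Γ.card : ℝ))⁻¹ else 0

/-!
Write `f = (f_O, f_E)`. By the chain rule, `log₂ |Γ| = H(f) = H(f_E) + H(f_O | f_E)`, and
`H(f_O | f_E) ≤ ∑_{u ∈ O} H(f_u | f_E)`. Every even vertex has `d` neighbours, all odd, so
Shearer's lemma for the cover `{N_u : u ∈ O}` of `E` gives `d H(f_E) ≤ ∑_{u ∈ O} H(f_{N_u})`.
Finally `f(N_u)` is a function of `f_E`, and conditioning on less information can only increase
entropy: `H(f_u | f_E) ≤ H(f_u | f(N_u))`.
-/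

namespace Real

lemma mul_logb_inv_eq_negMulLog_div (x : ℝ) : x * logb 2 x⁻¹ = negMulLog x / log 2 := by
  rw [negMulLog, logb, log_inv]
  ring

lemma sum_mul_negMulLog_div_le {ι : Type*} (s : Finset ι) {r q : ι → ℝ}
    (hr : ∀ i ∈ s, 0 ≤ r i) (hq : ∀ i ∈ s, 0 ≤ q i) (hqr : ∀ i ∈ s, r i = 0 → q i = 0) :
    ∑ i ∈ s, r i * negMulLog (q i / r i) ≤
      (∑ i ∈ s, r i) * negMulLog ((∑ i ∈ s, q i) / ∑ i ∈ s, r i) := by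
  rcases (Finset.sum_nonneg hr).eq_or_lt with hR | hR
  · rw [← hR, zero_mul]
    refine (Finset.sum_eq_zero fun i hi => ?_).le
    rw [(Finset.sum_eq_zero_iff_of_nonneg hr).mp hR.symm i hi, zero_mul]
  have hmass : s.centerMass r (fun i => q i / r i) = (∑ i ∈ s, q i) / ∑ i ∈ s, r i := by
    rw [Finset.centerMass, smul_eq_mul, inv_mul_eq_div]
    congr 1
    refine Finset.sum_congr rfl fun i hi => ?_
    rcases eq_or_ne (r i) 0 with h | h
    · simp [h, hqr i hi h]
    · rw [smul_eq_mul, mul_div_cancel₀ _ h]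
  have hjensen := concaveOn_negMulLog.le_map_centerMass hr hR
    fun i hi => Set.mem_Ici.mpr (div_nonneg (hq i hi) (hr i hi))
  rw [hmass, Finset.centerMass, smul_eq_mul, inv_mul_le_iff₀ hR] at hjensen
  simpa only [Function.comp_apply, smul_eq_mul] using hjensen

end Real

section Entropy

open Real
open scoped Classical

variable {Ω T U W : Type*} [Fintype Ω] {p : Ω → ℝ}

lemma pr_nonneg (hp : ∀ ω, 0 ≤ p ω) (X : Ω → T) (t : T) : 0 ≤ pr p X t :=
  Finset.sum_nonneg fun ω _ => by split_ifs <;> simp [hp ω]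

lemma pr_le_one (hp : ∀ ω, 0 ≤ p ω) (hp1 : ∑ ω, p ω = 1) (X : Ω → T) (t : T) :
    pr p X t ≤ 1 :=
  hp1 ▸ Finset.sum_le_sum fun ω _ => by split_ifs <;> simp [hp ω]

lemma pr_id (ω : Ω) : pr p (fun ω => ω) ω = p ω := by
  rw [pr, Finset.sum_ite_eq']
  simp

lemma pr_comp [Fintype U] (Y : Ω → U) (g : U → W) (w : W) :
    pr p (fun ω => g (Y ω)) w = ∑ u with g u = w, pr p Y u := by
  simp only [pr]
  rw [Finset.sum_comm]
  refine Finset.sum_congr rfl fun ω _ => ?_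
  rw [Finset.sum_ite_eq]
  simp

lemma pr_pair_comp [Fintype U] (X : Ω → T) (Y : Ω → U) (g : U → W) (t : T) (w : W) :
    pr p (fun ω => (X ω, g (Y ω))) (t, w) =
      ∑ u with g u = w, pr p (fun ω => (X ω, Y ω)) (t, u) := by
  simp only [pr]
  rw [Finset.sum_comm]
  refine Finset.sum_congr rfl fun ω _ => ?_
  by_cases hx : X ω = t <;> simp [hx]

lemma sum_pr_pair [Fintype T] (X : Ω → T) (Y : Ω → U) (u : U) :
    ∑ t, pr p (fun ω => (X ω, Y ω)) (t, u) = pr p Y u := by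
  simp only [pr]
  rw [Finset.sum_comm]
  refine Finset.sum_congr rfl fun ω _ => ?_
  by_cases hy : Y ω = u <;> simp [hy]

lemma pr_pair_le [Fintype T] (hp : ∀ ω, 0 ≤ p ω) (X : Ω → T) (Y : Ω → U) (t : T) (u : U) :
    pr p (fun ω => (X ω, Y ω)) (t, u) ≤ pr p Y u :=
  sum_pr_pair X Y u ▸ Finset.single_le_sum (f := fun t => pr p (fun ω => (X ω, Y ω)) (t, u))
    (fun _ _ => pr_nonneg hp _ _) (Finset.mem_univ t)

variable [Fintype T] [Fintype U] [Fintype W]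

lemma ent_eq_sum_negMulLog (X : Ω → T) : ent p X = (∑ t, negMulLog (pr p X t)) / log 2 := by
  simp only [ent, mul_logb_inv_eq_negMulLog_div, Finset.sum_div]

lemma condEnt_eq_sum_negMulLog (X : Ω → T) (Y : Ω → U) :
    condEnt p X Y = (∑ u, pr p Y u *
      ∑ t, negMulLog (pr p (fun ω => (X ω, Y ω)) (t, u) / pr p Y u)) / log 2 := by
  simp only [condEnt, mul_logb_inv_eq_negMulLog_div, Finset.sum_div,
    mul_div_assoc]

lemma ent_nonneg (hp : ∀ ω, 0 ≤ p ω) (hp1 : ∑ ω, p ω = 1) (X : Ω → T) : 0 ≤ ent p X := by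
  rw [ent_eq_sum_negMulLog]
  exact div_nonneg (Finset.sum_nonneg fun t _ =>
    negMulLog_nonneg (pr_nonneg hp X t) (pr_le_one hp hp1 X t)) (log_nonneg one_le_two)

lemma ent_of_subsingleton [Subsingleton T] (hp1 : ∑ ω, p ω = 1) (X : Ω → T) : ent p X = 0 := by
  have hpr : ∀ t, pr p X t = 1 := fun t => by simp [pr, Subsingleton.elim _ t, hp1]
  simp [ent_eq_sum_negMulLog, hpr]

lemma ent_comp_of_injective {σ : T → W} (hσ : σ.Injective) (X : Ω → T) :
    ent p (fun ω => σ (X ω)) = ent p X := by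
  have hpr : ∀ w, pr p (fun ω => σ (X ω)) w = ∑ t with σ t = w, pr p X t := pr_comp X σ
  simp only [ent_eq_sum_negMulLog]
  congr 1
  refine (Fintype.sum_of_injective σ hσ _ _ (fun w hw => ?_) fun t => ?_).symm
  · rw [hpr, Finset.sum_eq_zero fun t ht => absurd ⟨t, (Finset.mem_filter.mp ht).2⟩ hw,
      negMulLog_zero]
  · rw [hpr, Finset.sum_eq_single_of_mem t (by simp) fun t' ht' hne =>
      absurd (hσ (Finset.mem_filter.mp ht').2) hne]

lemma condEnt_nonneg (hp : ∀ ω, 0 ≤ p ω) (X : Ω → T) (Y : Ω → U) : 0 ≤ condEnt p X Y := by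
  rw [condEnt_eq_sum_negMulLog]
  refine div_nonneg (Finset.sum_nonneg fun u _ => mul_nonneg (pr_nonneg hp Y u)
    (Finset.sum_nonneg fun t _ => negMulLog_nonneg (div_nonneg (pr_nonneg hp _ _)
      (pr_nonneg hp Y u)) (div_le_one_of_le₀ (pr_pair_le hp X Y t u) (pr_nonneg hp Y u))))
    (log_nonneg one_le_two)

lemma ent_pair_eq_add_condEnt (hp : ∀ ω, 0 ≤ p ω) (X : Ω → T) (Y : Ω → U) :
    ent p (fun ω => (X ω, Y ω)) = ent p Y + condEnt p X Y := by
  rw [ent_eq_sum_negMulLog, ent_eq_sum_negMulLog, condEnt_eq_sum_negMulLog, ← add_div,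
    Fintype.sum_prod_type_right, ← Finset.sum_add_distrib]
  congr 1
  refine Finset.sum_congr rfl fun u _ => ?_
  set r := pr p Y u
  set q := fun t => pr p (fun ω => (X ω, Y ω)) (t, u)
  rcases eq_or_ne r 0 with hr | hr
  · have hq : ∀ t, q t = 0 := fun t =>
      le_antisymm (hr ▸ pr_pair_le hp X Y t u) (pr_nonneg hp _ _)
    simp [q, hq, hr]
  · calc ∑ t, negMulLog (q t) = ∑ t, negMulLog (r * (q t / r)) := by
          simp only [mul_div_cancel₀ _ hr]
      _ = (∑ t, q t) / r * negMulLog r + r * ∑ t, negMulLog (q t / r) := by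
          simp only [negMulLog_mul, Finset.sum_add_distrib, Finset.sum_div, Finset.sum_mul,
            Finset.mul_sum]
      _ = negMulLog r + r * ∑ t, negMulLog (q t / r) := by
          rw [sum_pr_pair X Y u, div_self hr, one_mul]

lemma condEnt_le_condEnt_comp (hp : ∀ ω, 0 ≤ p ω) (X : Ω → T) (Y : Ω → U) (g : U → W) :
    condEnt p X Y ≤ condEnt p X (fun ω => g (Y ω)) := by
  rw [condEnt_eq_sum_negMulLog, condEnt_eq_sum_negMulLog]
  refine div_le_div_of_nonneg_right ?_ (log_nonneg one_le_two)
  simp only [Finset.mul_sum]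
  rw [Finset.sum_comm, Finset.sum_comm (s := Finset.univ (α := W))]
  refine Finset.sum_le_sum fun t _ => ?_
  rw [← Finset.sum_fiberwise Finset.univ g]
  refine Finset.sum_le_sum fun w _ => ?_
  rw [pr_comp Y g w, pr_pair_comp X Y g t w]
  exact sum_mul_negMulLog_div_le _ (fun u _ => pr_nonneg hp Y u) (fun u _ => pr_nonneg hp _ _)
    fun u _ hu => le_antisymm (hu ▸ pr_pair_le hp X Y t u) (pr_nonneg hp _ _)

end Entropy

section Restrict

variable {Ω α β : Type*} [Fintype Ω] [DecidableEq α] [Fintype β] {p : Ω → ℝ}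

abbrev restrictRV (X : Ω → α → β) (S : Finset α) : Ω → S → β := fun ω => S.restrict (X ω)

lemma ent_restrictRV_insert (hp : ∀ ω, 0 ≤ p ω) (X : Ω → α → β) (v : α) (S : Finset α) :
    ent p (restrictRV X (insert v S)) =
      ent p (restrictRV X S) + condEnt p (fun ω => X ω v) (restrictRV X S) := by
  let σ (h : ↥(insert v S) → β) : β × (S → β) :=
    (h ⟨v, Finset.mem_insert_self v S⟩, fun w => h ⟨w, Finset.mem_insert_of_mem w.2⟩)
  have hσ : σ.Injective := fun h₁ h₂ h => by
    funext ⟨w, hw⟩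
    rcases Finset.mem_insert.mp hw with rfl | hwS
    · exact congrArg Prod.fst h
    · exact congrFun (congrArg Prod.snd h) ⟨w, hwS⟩
  rw [← ent_pair_eq_add_condEnt hp, ← ent_comp_of_injective hσ]
  rfl

lemma condEnt_restrictRV_anti {T : Type*} [Fintype T] (hp : ∀ ω, 0 ≤ p ω) (Z : Ω → T)
    (X : Ω → α → β) {S S' : Finset α} (h : S ⊆ S') :
    condEnt p Z (restrictRV X S') ≤ condEnt p Z (restrictRV X S) :=
  condEnt_le_condEnt_comp hp Z (restrictRV X S') (Finset.restrict₂ (π := fun _ => β) h)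

lemma ent_restrictRV_union_le (hp : ∀ ω, 0 ≤ p ω) (X : Ω → α → β) (D E : Finset α) :
    ent p (restrictRV X (D ∪ E)) ≤
      ent p (restrictRV X E) + ∑ v ∈ D, condEnt p (fun ω => X ω v) (restrictRV X E) := by
  induction D using Finset.induction_on with
  | empty =>
    rw [Finset.empty_union, Finset.sum_empty, add_zero]
  | insert v D hv ih =>
    rw [Finset.insert_union, ent_restrictRV_insert hp, Finset.sum_insert hv]
    have := condEnt_restrictRV_anti hp (fun ω => X ω v) X (Finset.subset_union_right : E ⊆ D ∪ E)
    linarith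

lemma ent_restrictRV_erase_add_le (hp : ∀ ω, 0 ≤ p ω) (X : Ω → α → β) {A U : Finset α} {v : α}
    (hA : A.erase v ⊆ U) :
    ent p (restrictRV X (A.erase v)) +
        (if v ∈ A then condEnt p (fun ω => X ω v) (restrictRV X U) else 0) ≤
      ent p (restrictRV X A) := by
  split_ifs with hv
  · conv_rhs => rw [← Finset.insert_erase hv]
    rw [ent_restrictRV_insert hp]
    exact add_le_add le_rfl (condEnt_restrictRV_anti hp (fun ω => X ω v) X hA)
  · rw [Finset.erase_eq_of_notMem hv, add_zero]

lemma shearer {ι : Type*} (hp : ∀ ω, 0 ≤ p ω) (hp1 : ∑ ω, p ω = 1) (X : Ω → α → β) (k : ℕ)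
    (U : Finset α) (I : Finset ι) (A : ι → Finset α) (hA : ∀ i ∈ I, A i ⊆ U)
    (hk : ∀ v ∈ U, k ≤ #{i ∈ I | v ∈ A i}) :
    k * ent p (restrictRV X U) ≤ ∑ i ∈ I, ent p (restrictRV X (A i)) := by
  induction U using Finset.induction_on generalizing A with
  | empty =>
    rw [ent_of_subsingleton hp1, mul_zero]
    exact Finset.sum_nonneg fun i _ => ent_nonneg hp hp1 _
  | insert v U hv ih =>
    set c := condEnt p (fun ω => X ω v) (restrictRV X U)
    have hA' : ∀ i ∈ I, (A i).erase v ⊆ U := fun i hi =>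
      (Finset.erase_subset_erase v (hA i hi)).trans (Finset.erase_insert_subset v U)
    have hk' : ∀ w ∈ U, k ≤ #{i ∈ I | w ∈ (A i).erase v} := fun w hw => by
      simpa only [Finset.mem_erase, ne_of_mem_of_not_mem hw hv, ne_eq, not_false_eq_true,
        true_and] using hk w (Finset.mem_insert_of_mem hw)
    have hcount : k * c ≤ ∑ i ∈ I, if v ∈ A i then c else 0 := by
      rw [← Finset.sum_filter, Finset.sum_const, nsmul_eq_mul]
      exact mul_le_mul_of_nonneg_right (by exact_mod_cast hk v (Finset.mem_insert_self v U))
        (condEnt_nonneg hp _ _)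
    calc k * ent p (restrictRV X (insert v U))
        = k * ent p (restrictRV X U) + k * c := by
          rw [ent_restrictRV_insert hp, mul_add]
      _ ≤ ∑ i ∈ I, ent p (restrictRV X ((A i).erase v)) +
            ∑ i ∈ I, if v ∈ A i then c else 0 := add_le_add (ih _ hA' hk') hcount
      _ ≤ ∑ i ∈ I, ent p (restrictRV X (A i)) := by
          rw [← Finset.sum_add_distrib]
          exact Finset.sum_le_sum fun i hi => ent_restrictRV_erase_add_le hp X (hA' i hi)

lemma ent_restrictRV_univ [Fintype α] (X : Ω → α → β) :
    ent p (restrictRV X Finset.univ) = ent p X :=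
  ent_comp_of_injective (fun _ _ h => funext fun a => congrFun h ⟨a, Finset.mem_univ a⟩) X

lemma ent_restrictRV_filter [Fintype α] (X : Ω → α → β) (P : α → Prop) [DecidablePred P] :
    ent p (restrictRV X ({a | P a} : Finset α)) = ent p (fun ω (a : {a // P a}) => X ω a) := by
  let σ (h : ({a | P a} : Finset α) → β) (a : {a // P a}) : β := h ⟨a, by simp [a.2]⟩
  have hσ : σ.Injective := fun h₁ h₂ h => by
    funext ⟨a, ha⟩
    exact congrFun h ⟨a, (Finset.mem_filter.mp ha).2⟩
  exact (ent_comp_of_injective hσ _).symm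

end Restrict

section Hypercube

open scoped Classical

variable {d : ℕ}

lemma card_true_add_card_true (u v : V d) :
    #{i | u i = true} + #{i | v i = true} =
      #{i | u i ≠ v i} + 2 * #{i | u i = true ∧ v i = true} := by
  simp only [Finset.card_filter, Finset.mul_sum, ← Finset.sum_add_distrib]
  refine Finset.sum_congr rfl fun i _ => ?_
  cases u i <;> cases v i <;> rfl

lemma isEven_iff_not_isEven_of_adj {u v : V d} (h : (cube d).Adj u v) :
    isEven v ↔ ¬ isEven u := by
  have hcard := card_true_add_card_true u v
  have hdiff : #{i | u i ≠ v i} = 1 := h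
  simp only [isEven, Nat.even_iff]
  omega

lemma cube_adj_update_not (v : V d) (i : Fin d) :
    (cube d).Adj v (Function.update v i (!v i)) := by
  show #{j | v j ≠ Function.update v i (!v i) j} = 1
  rw [Finset.card_eq_one]
  refine ⟨i, Finset.ext fun j => ?_⟩
  rcases eq_or_ne j i with rfl | hj <;> simp [*]

lemma le_card_filter_cube_adj (v : V d) : d ≤ #{u | (cube d).Adj v u} := by
  have hinj : (fun i => Function.update v i (!v i)).Injective := fun i j h => by
    by_contra hij
    simpa [Function.update_of_ne hij] using congrFun h i
  simpa using Finset.card_le_card_of_injOn (s := Finset.univ) (t := {u | (cube d).Adj v u}) _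
    (fun i _ => by simpa using cube_adj_update_not v i) hinj.injOn

variable {β : Type*} [Fintype β] {p : (V d → β) → ℝ}

lemma cube_shearer (hp : ∀ f, 0 ≤ p f) (hp1 : ∑ f, p f = 1) :
    d * ent p (restrictRV (fun f => f) {u | isEven u}) ≤
      ∑ u with ¬ isEven u, ent p (fun f (v : {v // (cube d).Adj u v}) => f v) := by
  simp only [← ent_restrictRV_filter]
  refine shearer hp hp1 (fun f => f) d _ _ _ (fun u hu v hv => ?_) fun w hw => ?_
  · simp only [Finset.mem_filter, Finset.mem_univ, true_and] at hu hv ⊢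
    exact (isEven_iff_not_isEven_of_adj hv).mpr hu
  · refine (le_card_filter_cube_adj w).trans (Finset.card_le_card fun u hu => ?_)
    simp only [Finset.mem_filter, Finset.mem_univ, true_and] at hu hw ⊢
    exact ⟨fun he => (isEven_iff_not_isEven_of_adj hu).mp he hw, hu.symm⟩

lemma condEnt_le_condEnt_image_cube_nbhd [DecidableEq β] (hp : ∀ f, 0 ≤ p f) {u : V d}
    (hu : ¬ isEven u) :
    condEnt p (fun f => f u) (restrictRV (fun f => f) {v | isEven v}) ≤
      condEnt p (fun f => f u)
        (fun f => Finset.univ.image fun v : {v // (cube d).Adj u v} => f v.1) := by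
  have hE : ∀ v : {v // (cube d).Adj u v}, v.1 ∈ ({v | isEven v} : Finset (V d)) := fun v => by
    simpa using (isEven_iff_not_isEven_of_adj v.2).mpr hu
  exact condEnt_le_condEnt_comp hp (fun f => f u) (restrictRV (fun f => f) {v | isEven v})
    fun h => Finset.univ.image fun v : {v // (cube d).Adj u v} => h ⟨v, hE v⟩

end Hypercube

lemma unif_nonneg (d : ℕ) (Γ : Finset (V d → Fin 4)) (f : V d → Fin 4) : 0 ≤ unif d Γ f := by
  unfold unif
  split_ifs <;> positivity

lemma sum_unif {d : ℕ} {Γ : Finset (V d → Fin 4)} (hne : Γ.Nonempty) : ∑ f, unif d Γ f = 1 := by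
  simp only [unif, Finset.sum_ite_mem, Finset.univ_inter, Finset.sum_const, nsmul_eq_mul]
  exact mul_inv_cancel₀ (by exact_mod_cast hne.card_pos.ne')

lemma ent_unif {d : ℕ} {Γ : Finset (V d → Fin 4)} (hne : Γ.Nonempty) :
    ent (unif d Γ) (fun f => f) = Real.logb 2 #Γ := by
  have hterm : ∀ f, unif d Γ f * Real.logb 2 (unif d Γ f)⁻¹ =
      if f ∈ Γ then (#Γ : ℝ)⁻¹ * Real.logb 2 #Γ else 0 := fun f => by
    unfold unif
    split_ifs <;> simp
  simp only [ent, pr_id, hterm, Finset.sum_ite_mem, Finset.univ_inter, Finset.sum_const,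
    nsmul_eq_mul]
  exact mul_inv_cancel_left₀ (by exact_mod_cast hne.card_pos.ne') _

open scoped Classical in
theorem entropy_count_bound_general (d : ℕ) (hd : 1 ≤ d) (Γ : Finset (V d → Fin 4))
    (hne : Γ.Nonempty) :
    Real.logb 2 (Γ.card : ℝ) ≤
      ∑ u ∈ Finset.univ.filter (fun u : V d => ¬ isEven u), Tp d (unif d Γ) u := by
  set O := Finset.univ.filter fun u : V d => ¬ isEven u
  set E := Finset.univ.filter fun u : V d => isEven u
  have hp := unif_nonneg d Γ
  calc Real.logb 2 (Γ.card : ℝ) = ent (unif d Γ) (restrictRV (fun f => f) (O ∪ E)) := by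
        rw [← ent_unif hne, Finset.union_comm, Finset.filter_union_filter_not_eq,
          ent_restrictRV_univ]
    _ ≤ ent (unif d Γ) (restrictRV (fun f => f) E) +
          ∑ u ∈ O, condEnt (unif d Γ) (fun f => f u) (restrictRV (fun f => f) E) :=
        ent_restrictRV_union_le hp (fun f => f) O E
    _ ≤ ∑ u ∈ O, Tp d (unif d Γ) u := by
        simp only [Tp, Finset.sum_add_distrib, ← Finset.mul_sum]
        gcongr ?_ + ∑ u ∈ O, ?_ with u hu
        · rw [one_div, le_inv_mul_iff₀ (by exact_mod_cast hd)]
          exact cube_shearer hp (sum_unif hne)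
        · exact condEnt_le_condEnt_image_cube_nbhd hp (Finset.mem_filter.mp hu).2

open scoped Classical in
/-- For `f` uniform on a nonempty set `Γ` of proper 4-colorings of `Q_d`,
`log₂ |Γ| ≤ ∑_{u ∈ O} T_Γ(u)`. -/
theorem entropy_count_bound (d : ℕ) (hd : 1 ≤ d) (Γ : Finset (V d → Fin 4))
    (hne : Γ.Nonempty) (hcol : ∀ f ∈ Γ, IsColoring d 4 f) :
    Real.logb 2 (Γ.card : ℝ) ≤
      ∑ u ∈ Finset.univ.filter (fun u : V d => ¬ isEven u), Tp d (unif d Γ) u :=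
  entropy_count_bound_general d hd Γ hne
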